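/- arXiv:math/0211106 — 4 statements merged into one kernel-verified Lean document; each statement's English description precedes it below -/
import Mathlib

section
/- Let 1 ≤ k < n be coprime, with Hirzebruch–Jung continued fraction expansions n/k = [n_1,...,n_p] and n/(n−k) = [n_1',...,n_{p'}'] (all entries ≥ 2). Then p' = n_1 + ⋯ + n_p − 2p + 1. -/
/-!
With `x = n/k` and `y = n/(n-k)` we have `(x - 1)(y - 1) = 1`. For two expansions related in
this way the leading entries cannot both be `≥ 3`, and if both are `2` then both expansions are
`[2]`. If `n₁ ≥ 3`, then `n₁' = 2`, and replacing `n₁` by `n₁ - 1` while deleting `n₁'` gives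
again such a pair. This step lowers `∑ (nᵢ - 1)`, `∑ (nⱼ' - 1)` and `p + p'` by one each, so by
induction `∑ (nᵢ - 1) = p + p' - 1`.
-/

/-- Evaluation of the Hirzebruch–Jung ("negative") continued fraction
`[n₁,…,n_p] = n₁ − 1/(n₂ − 1/(⋯ − 1/n_p))` as a rational number. -/
def hjEval : List ℤ → ℚ
  | [] => 0
  | [a] => (a : ℚ)
  | a :: b :: l => (a : ℚ) - 1 / hjEval (b :: l)

lemma hjEval_cons_of_ne_nil (a : ℤ) {l : List ℤ} (hl : l ≠ []) :
    hjEval (a :: l) = a - 1 / hjEval l := by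
  cases l with
  | nil => exact absurd rfl hl
  | cons b m => rfl

lemma hjEval_cons_sub_one (a : ℤ) (l : List ℤ) :
    hjEval ((a - 1) :: l) = hjEval (a :: l) - 1 := by
  cases l with
  | nil => simp [hjEval]
  | cons b m => simp only [hjEval]; push_cast; ring

lemma one_lt_hjEval {l : List ℤ} (hl : l ≠ []) (h2 : ∀ x ∈ l, 2 ≤ x) : 1 < hjEval l := by
  induction l with
  | nil => exact absurd rfl hl
  | cons a t ih =>
    have ha : (2 : ℚ) ≤ a := by exact_mod_cast h2 a List.mem_cons_self
    rcases eq_or_ne t [] with rfl | ht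
    · simp only [hjEval]; linarith
    have hy := ih ht fun x hx => h2 x (List.mem_cons_of_mem a hx)
    have : 1 / hjEval t < 1 := (div_lt_one (by linarith)).2 hy
    rw [hjEval_cons_of_ne_nil a ht]
    linarith

lemma hjEval_cons_lt (a : ℤ) {l : List ℤ} (hl : l ≠ []) (h2 : ∀ x ∈ l, 2 ≤ x) :
    hjEval (a :: l) < a := by
  have := one_lt_hjEval hl h2
  rw [hjEval_cons_of_ne_nil a hl]
  have : 0 < 1 / hjEval l := by positivity
  linarith

lemma hjEval_cons_le (a : ℤ) (l : List ℤ) (h2 : ∀ x ∈ l, 2 ≤ x) : hjEval (a :: l) ≤ a := by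
  rcases eq_or_ne l [] with rfl | hl
  · rfl
  · exact (hjEval_cons_lt a hl h2).le

lemma sub_one_lt_hjEval_cons (a : ℤ) (l : List ℤ) (h2 : ∀ x ∈ l, 2 ≤ x) :
    (a : ℚ) - 1 < hjEval (a :: l) := by
  rcases eq_or_ne l [] with rfl | hl
  · simp [hjEval]
  have := one_lt_hjEval hl h2
  have : 1 / hjEval l < 1 := (div_lt_one (by linarith)).2 this
  rw [hjEval_cons_of_ne_nil a hl]
  linarith

def HJDual (L L' : List ℤ) : Prop :=
  (hjEval L - 1) * (hjEval L' - 1) = 1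

lemma HJDual.symm {L L' : List ℤ} (h : HJDual L L') : HJDual L' L := by
  unfold HJDual at *; linarith

lemma HJDual.exists_eq_two_cons_of_three_le {a : ℤ} {l L' : List ℤ} (h : HJDual (a :: l) L')
    (ha : 3 ≤ a) (h2 : ∀ x ∈ l, 2 ≤ x) (hL' : L' ≠ []) (h2' : ∀ x ∈ L', 2 ≤ x) :
    ∃ t, L' = 2 :: t ∧ t ≠ [] ∧ HJDual ((a - 1) :: l) t := by
  obtain ⟨b, t, rfl⟩ := List.exists_cons_of_ne_nil hL'
  have h2t : ∀ x ∈ t, 2 ≤ x := fun x hx => h2' x (List.mem_cons_of_mem b hx)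
  have hx : (2 : ℚ) < hjEval (a :: l) := by
    have : (3 : ℚ) ≤ a := by exact_mod_cast ha
    linarith [sub_one_lt_hjEval_cons a l h2]
  have hy : hjEval (b :: t) < 2 := by
    unfold HJDual at h
    nlinarith [one_lt_hjEval hL' h2']
  have hb : b = 2 := by
    have : (b : ℚ) < 3 := by linarith [sub_one_lt_hjEval_cons b t h2t]
    have : b < 3 := by exact_mod_cast this
    linarith [h2' b List.mem_cons_self]
  subst hb
  have ht : t ≠ [] := by
    rintro rfl
    simp [hjEval] at hy
  refine ⟨t, rfl, ht, ?_⟩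
  have hw : hjEval t ≠ 0 := (zero_lt_one.trans (one_lt_hjEval ht h2t)).ne'
  unfold HJDual at h ⊢
  rw [hjEval_cons_of_ne_nil _ ht] at h
  rw [hjEval_cons_sub_one]
  field_simp at h
  push_cast at h
  linear_combination h

lemma HJDual.eq_nil_of_heads_eq_two {l t : List ℤ} (h : HJDual (2 :: l) (2 :: t))
    (h2 : ∀ x ∈ l, 2 ≤ x) (h2' : ∀ x ∈ t, 2 ≤ x) : l = [] := by
  by_contra hl
  have hx := hjEval_cons_lt 2 hl h2
  have hy := sub_one_lt_hjEval_cons 2 t h2'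
  have hy' := hjEval_cons_le 2 t h2'
  have hx' := one_lt_hjEval (List.cons_ne_nil 2 l) (by simpa using h2)
  unfold HJDual at h
  push_cast at hx hy hy'
  nlinarith

theorem HJDual.sum_sub_length_eq {L L' : List ℤ} (h : HJDual L L')
    (hL : L ≠ []) (hL' : L' ≠ []) (h2 : ∀ x ∈ L, 2 ≤ x) (h2' : ∀ x ∈ L', 2 ≤ x) :
    L.sum - L.length = L.length + L'.length - 1 ∧
      L'.sum - L'.length = L.length + L'.length - 1 := by
  obtain ⟨N, hN⟩ : ∃ N, L.length + L'.length = N := ⟨_, rfl⟩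
  induction N using Nat.strong_induction_on generalizing L L' with
  | _ N ih =>
  wlog hA : ∃ a l, L = a :: l ∧ 3 ≤ a generalizing L L'
  · push Not at hA
    obtain ⟨a, l, rfl⟩ := List.exists_cons_of_ne_nil hL
    obtain ⟨b, t, rfl⟩ := List.exists_cons_of_ne_nil hL'
    by_cases hb : 3 ≤ b
    · have := this h.symm hL' hL h2' h2 (by omega) ⟨b, t, rfl, hb⟩
      omega
    rw [List.forall_mem_cons] at h2 h2'
    obtain rfl : a = 2 := by have := hA a l rfl; omega
    obtain rfl : b = 2 := by omega
    obtain rfl := h.eq_nil_of_heads_eq_two h2.2 h2'.2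
    obtain rfl := h.symm.eq_nil_of_heads_eq_two h2'.2 h2.2
    simp
  obtain ⟨a, l, rfl, ha⟩ := hA
  rw [List.forall_mem_cons] at h2
  obtain ⟨t, rfl, ht, ht'⟩ := h.exists_eq_two_cons_of_three_le ha h2.2 hL' h2'
  have := ih _ (by simp only [List.length_cons] at hN ⊢; omega) ht' (List.cons_ne_nil _ _) ht
    (List.forall_mem_cons.2 ⟨by omega, h2.2⟩) (List.forall_mem_cons.1 h2').2 rfl
  simp only [List.sum_cons, List.length_cons] at this ⊢
  push_cast at this ⊢
  omega

theorem hj_dual_length_general (n k : ℕ) (hk : 1 ≤ k) (hkn : k < n)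
    (L L' : List ℤ) (hL : L ≠ []) (hL' : L' ≠ [])
    (h2 : ∀ a ∈ L, 2 ≤ a) (h2' : ∀ a ∈ L', 2 ≤ a)
    (hval : hjEval L = (n : ℚ) / (k : ℚ))
    (hval' : hjEval L' = (n : ℚ) / ((n : ℚ) - (k : ℚ))) :
    (L'.length : ℤ) = L.sum - 2 * L.length + 1 := by
  have hdual : HJDual L L' := by
    have hk0 : (k : ℚ) ≠ 0 := Nat.cast_ne_zero.2 (by omega)
    have hnk : (n : ℚ) - k ≠ 0 := sub_ne_zero.2 (by exact_mod_cast hkn.ne')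
    unfold HJDual
    rw [hval, hval']
    field_simp
    ring
  have := (hdual.sum_sub_length_eq hL hL' h2 h2').1
  linarith

/-- If `n/k = [n₁,…,n_p]` and `n/(n−k) = [n₁',…,n_{p'}']` are the Hirzebruch–Jung
continued fraction expansions (all entries ≥ 2) for coprime `1 ≤ k < n`, then
`p' = n₁ + ⋯ + n_p − 2p + 1`. -/
theorem hj_dual_length (n k : ℕ) (hk : 1 ≤ k) (hkn : k < n) (hco : Nat.Coprime n k)
    (L L' : List ℤ) (hL : L ≠ []) (hL' : L' ≠ [])
    (h2 : ∀ a ∈ L, 2 ≤ a) (h2' : ∀ a ∈ L', 2 ≤ a)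
    (hval : hjEval L = (n : ℚ) / (k : ℚ))
    (hval' : hjEval L' = (n : ℚ) / ((n : ℚ) - (k : ℚ))) :
    (L'.length : ℤ) = L.sum - 2 * L.length + 1 :=
  hj_dual_length_general n k hk hkn L L' hL hL' h2 h2' hval hval'
end

section
/- If n/k = [n_1,...,n_p] is the Hirzebruch–Jung continued fraction of n/k with p > 1 and n_2,...,n_{p−1} ≥ 3, then the expansion of n/(n−k) is the sequence (2^{(n_1−2)}, 3, 2^{(n_2−3)}, 3, ..., 3, 2^{(n_{p−1}−3)}, 3, 2^{(n_p−2)}), where 2^{(t)} denotes t consecutive twos. -/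
lemma hjEval_cons (a : ℤ) (L : List ℤ) (hL : L ≠ []) :
    hjEval (a :: L) = (a : ℚ) - 1 / hjEval L := by
  cases L with
  | nil => simp at hL
  | cons b l => rfl

lemma hjEval_gt_one : ∀ L : List ℤ, L ≠ [] → (∀ m ∈ L, (2:ℤ) ≤ m) → 1 < hjEval L := by
  intro L
  induction L with
  | nil => simp
  | cons a l ih =>
    intro _ h
    have ha : (2:ℚ) ≤ (a:ℚ) := by exact_mod_cast h a List.mem_cons_self
    cases l with
    | nil => simp only [hjEval]; linarith
    | cons b l' =>
      have h1 : 1 < hjEval (b :: l') := ih (by simp) (fun m hm => h m (List.mem_cons_of_mem _ hm))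
      rw [hjEval_cons a _ (by simp)]
      have h0 : (0:ℚ) < hjEval (b :: l') := by linarith
      have h2 : 1 / hjEval (b :: l') < 1 := by rw [div_lt_one h0]; linarith
      have h3 : 0 < 1 / hjEval (b :: l') := by positivity
      linarith

lemma hjEval_twos (t : ℕ) (L : List ℤ) (hL : L ≠ []) (h1 : 1 < hjEval L) :
    hjEval (List.replicate t 2 ++ L)
      = (((t:ℚ)+1) * hjEval L - t) / ((t:ℚ) * hjEval L - ((t:ℚ) - 1)) := by
  induction t with
  | zero => simp
  | succ s ih =>
    have hne : List.replicate s (2:ℤ) ++ L ≠ [] := by simp [hL]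
    have hd : (0:ℚ) < (s:ℚ) * hjEval L - ((s:ℚ) - 1) := by nlinarith [Nat.cast_nonneg (α := ℚ) s]
    have hnum : (0:ℚ) < ((s:ℚ)+1) * hjEval L - s := by nlinarith [Nat.cast_nonneg (α := ℚ) s]
    rw [List.replicate_succ, List.cons_append, hjEval_cons _ _ hne, ih]
    push_cast
    have h2 : ((s:ℚ)+1) * hjEval L - s ≠ 0 := ne_of_gt hnum
    have h3 : (s:ℚ) * hjEval L - ((s:ℚ)-1) ≠ 0 := ne_of_gt hd
    have h4 : ((s:ℚ) + 1) * hjEval L - ((s:ℚ) + 1 - 1) ≠ 0 := by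
      intro h; apply h2; linarith
    rw [one_div_div, sub_div' h2, div_eq_div_iff h2 h4]
    ring

lemma toNat_castQ {x : ℤ} {c : ℤ} (h : c ≤ x) : ((x - c).toNat : ℚ) = (x:ℚ) - (c:ℚ) := by
  have h2 : ((x - c).toNat : ℤ) = x - c := Int.toNat_of_nonneg (by omega)
  exact_mod_cast congrArg (fun z : ℤ => (z:ℚ)) h2

lemma hjEval_dual_tail : ∀ (M : List ℤ) (b : ℤ), (∀ m ∈ M, 3 ≤ m) → 2 ≤ b →
    hjEval ((M.flatMap fun m => 3 :: List.replicate (m - 3).toNat 2)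
        ++ 3 :: List.replicate (b - 2).toNat 2)
      = (2 * hjEval (M ++ [b]) - 1) / (hjEval (M ++ [b]) - 1) := by
  intro M
  induction M with
  | nil =>
    intro b _ hb
    have hbQ : ((b - 2).toNat : ℚ) = (b:ℚ) - 2 := toNat_castQ hb
    simp only [List.flatMap_nil, List.nil_append]
    rw [show hjEval [b] = (b:ℚ) from rfl]
    cases ht : (b - 2).toNat with
    | zero =>
      have hb2 : b = 2 := by omega
      subst hb2
      norm_num [hjEval]
    | succ s =>
      have hbs : ((b:ℚ)) = (s:ℚ) + 3 := by rw [ht] at hbQ; push_cast at hbQ; linarith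
      rw [List.replicate_succ']
      rw [hjEval_cons 3 _ (by simp), hjEval_twos s [2] (by simp) (by norm_num [hjEval]),
        show hjEval [2] = 2 from rfl, hbs]
      have hd : (0:ℚ) < (s:ℚ) * 2 - ((s:ℚ) - 1) := by nlinarith [Nat.cast_nonneg (α := ℚ) s]
      have hn : (0:ℚ) < ((s:ℚ) + 1) * 2 - (s:ℚ) := by nlinarith [Nat.cast_nonneg (α := ℚ) s]
      have hb1 : (0:ℚ) < (s:ℚ) + 3 - 1 := by nlinarith [Nat.cast_nonneg (α := ℚ) s]
      rw [one_div_div, sub_div' hn.ne', div_eq_div_iff hn.ne' hb1.ne']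
      ring
  | cons m M' ih =>
    intro b hM3 hb
    have hm : (3:ℤ) ≤ m := hM3 m (by simp)
    have hM' : ∀ x ∈ M', (3:ℤ) ≤ x := fun x hx => hM3 x (by simp [hx])
    set D : List ℤ := (M'.flatMap fun m => 3 :: List.replicate (m - 3).toNat 2)
        ++ 3 :: List.replicate (b - 2).toNat 2 with hD
    have hDne : D ≠ [] := by
      rw [hD]; intro h; have := congrArg List.length h; simp at this
    set y' : ℚ := hjEval (M' ++ [b]) with hy'def
    have hy' : 1 < y' := by
      apply hjEval_gt_one _ (by simp)
      intro x hx
      rcases List.mem_append.1 hx with h | h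
      · exact le_trans (by norm_num) (hM' x h)
      · simp at h; omega
    have hw : hjEval D = (2 * y' - 1) / (y' - 1) := ih b hM' hb
    have hy'1 : (0:ℚ) < y' - 1 := by linarith
    have hw1 : 1 < hjEval D := by
      rw [hw, lt_div_iff₀ hy'1]; linarith
    set s : ℕ := (m - 3).toNat with hs
    have hsm : ((s:ℚ)) = (m:ℚ) - 3 := toNat_castQ hm
    have hlist : ((m :: M').flatMap fun m => 3 :: List.replicate (m - 3).toNat 2)
        ++ 3 :: List.replicate (b - 2).toNat 2 = 3 :: (List.replicate s 2 ++ D) := by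
      simp [hD, List.append_assoc, hs]
    rw [hlist, hjEval_cons 3 _ (by simp [hDne]), hjEval_twos s D hDne hw1,
      List.cons_append, hjEval_cons m _ (by simp), ← hy'def, hsm]
    have hmQ : (3:ℚ) ≤ (m:ℚ) := by exact_mod_cast hm
    have e1 : ((m:ℚ) - 3 + 1) * hjEval D - ((m:ℚ) - 3)
        = (((m:ℚ) - 1) * y' - 1) / (y' - 1) := by
      rw [hw]; field_simp; ring
    have e2 : ((m:ℚ) - 3) * hjEval D - ((m:ℚ) - 3 - 1)
        = (((m:ℚ) - 2) * y' - 1) / (y' - 1) := by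
      rw [hw]; field_simp; ring
    rw [e1, e2]
    have p1 : (0:ℚ) < ((m:ℚ) - 1) * y' - 1 := by nlinarith
    have p2 : (0:ℚ) < ((m:ℚ) - 2) * y' - 1 := by nlinarith
    have hy'0 : (0:ℚ) < y' := by linarith
    have hden : (0:ℚ) < (m:ℚ) - 1 / y' - 1 := by
      have : 1 / y' < 1 := by rw [div_lt_one hy'0]; linarith
      linarith
    have p3 : (0:ℚ) < (m:ℚ) * y' - y' - 1 := by nlinarith
    have e3 : ((((m:ℚ) - 1) * y' - 1) / (y' - 1)) / ((((m:ℚ) - 2) * y' - 1) / (y' - 1))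
        = (((m:ℚ) - 1) * y' - 1) / (((m:ℚ) - 2) * y' - 1) := by
      rw [div_div_div_comm, div_self hy'1.ne', div_one]
    have e5 : (2 * ((m:ℚ) - 1 / y') - 1) / ((m:ℚ) - 1 / y' - 1)
        = (2 * (m:ℚ) * y' - y' - 2) / ((m:ℚ) * y' - y' - 1) := by
      rw [div_eq_div_iff hden.ne' p3.ne']
      field_simp
      ring
    rw [e3, one_div_div, sub_div' p1.ne', e5,
      div_eq_div_iff p1.ne' p3.ne']
    ring

/-- If `n/k = [n₁, n₂, …, n_{p−1}, n_p]` with `p > 1` and `n₂,…,n_{p−1} ≥ 3`, then the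
Hirzebruch–Jung expansion of `n/(n−k)` is
`(2^{(n₁−2)}, 3, 2^{(n₂−3)}, 3, …, 3, 2^{(n_{p−1}−3)}, 3, 2^{(n_p−2)})`,
where `2^{(t)}` denotes `t` consecutive twos. -/
theorem hj_dual_explicit (n k : ℕ) (hk : 1 ≤ k) (hkn : k < n) (hco : Nat.Coprime n k)
    (a b : ℤ) (M : List ℤ) (ha : 2 ≤ a) (hb : 2 ≤ b) (hM : ∀ m ∈ M, 3 ≤ m)
    (hval : hjEval (a :: (M ++ [b])) = (n : ℚ) / (k : ℚ)) :
    hjEval (List.replicate (a - 2).toNat 2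
        ++ (M.flatMap fun m => 3 :: List.replicate (m - 3).toNat 2)
        ++ 3 :: List.replicate (b - 2).toNat 2)
      = (n : ℚ) / ((n : ℚ) - (k : ℚ)) := by
  set y : ℚ := hjEval (M ++ [b]) with hydef
  have hy : 1 < y := by
    apply hjEval_gt_one _ (by simp)
    intro x hx
    rcases List.mem_append.1 hx with h | h
    · exact le_trans (by norm_num) (hM x h)
    · simp at h; omega
  have hy0 : (0:ℚ) < y := by linarith
  have hy1 : (0:ℚ) < y - 1 := by linarith
  have hq : (a:ℚ) - 1 / y = (n:ℚ) / (k:ℚ) := by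
    rw [← hval, hjEval_cons a _ (by simp), hydef]
  set D : List ℤ := (M.flatMap fun m => 3 :: List.replicate (m - 3).toNat 2)
      ++ 3 :: List.replicate (b - 2).toNat 2 with hD
  have hDne : D ≠ [] := by
    rw [hD]; intro h; have := congrArg List.length h; simp at this
  have hw : hjEval D = (2 * y - 1) / (y - 1) := hjEval_dual_tail M b hM hb
  have hw1 : 1 < hjEval D := by
    rw [hw, lt_div_iff₀ hy1]; linarith
  have haQ : (2:ℚ) ≤ (a:ℚ) := by exact_mod_cast ha
  have hsm : (((a - 2).toNat : ℚ)) = (a:ℚ) - 2 := toNat_castQ ha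
  rw [List.append_assoc, ← hD, hjEval_twos _ D hDne hw1, hsm]
  have p1 : (0:ℚ) < (a:ℚ) * y - 1 := by nlinarith
  have p2 : (0:ℚ) < ((a:ℚ) - 1) * y - 1 := by nlinarith
  have e1 : ((a:ℚ) - 2 + 1) * hjEval D - ((a:ℚ) - 2)
      = ((a:ℚ) * y - 1) / (y - 1) := by
    rw [hw, eq_div_iff hy1.ne']; field_simp; ring
  have e2 : ((a:ℚ) - 2) * hjEval D - ((a:ℚ) - 2 - 1)
      = (((a:ℚ) - 1) * y - 1) / (y - 1) := by
    rw [hw, eq_div_iff hy1.ne']; field_simp; ring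
  rw [e1, e2, div_div_div_comm, div_self hy1.ne', div_one]
  have hk0 : (0:ℚ) < (k:ℚ) := by exact_mod_cast hk
  have hnk : (0:ℚ) < (n:ℚ) - (k:ℚ) := by
    have : (k:ℚ) < (n:ℚ) := by exact_mod_cast hkn
    linarith
  have key : ((a:ℚ) * y - 1) * k = (n:ℚ) * y := by
    field_simp at hq
    linear_combination hq
  rw [div_eq_div_iff p2.ne' hnk.ne']
  linear_combination -key
end

section
/- If ψ(η,u,v) is entire in three variables, periodic with period 1 in each variable, and satisfies ψ(η+τ,u,v) = e^{−2πin(v−u)}ψ(η,u,v), ψ(η,u+τ,v) = e^{2πinη}ψ(η,u,v), ψ(η,u,v+τ) = e^{−2πinη}ψ(η,u,v) for some positive integer n and Im τ > 0, then ψ ≡ 0. -/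
open Complex Bornology Set Filter Topology


lemma key (τ : ℂ) (hτ : 0 < τ.im) (c : ℂ) (hc : c ≠ 0) (g : ℂ → ℂ)
    (hg : Differentiable ℂ g)
    (h1 : ∀ u, g (u + 1) = g u) (h2 : ∀ u, g (u + τ) = c * g u)
    (hβ : ∀ k : ℤ, Real.log ‖c‖ ≠ 2 * Real.pi * k * τ.im) :
    ∀ u, g u = 0 := by
  have hτ0 : τ.im ≠ 0 := ne_of_gt hτ
  set β : ℝ := Real.log ‖c‖ / τ.im with hβdef
  set G : ℂ → ℂ := fun u => Complex.exp (I * β * u) * g u with hG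
  have hGd : Differentiable ℂ G := ((differentiable_const _).mul differentiable_id).cexp.mul hg
  set e1 : ℂ := Complex.exp (I * β) with he1
  set e2 : ℂ := Complex.exp (I * β * τ) * c with he2
  have habs1 : ‖e1‖ = 1 := by
    rw [he1, Complex.norm_exp]
    simp [Real.exp_eq_one_iff]
  have habs2 : ‖e2‖ = 1 := by
    rw [he2, norm_mul, Complex.norm_exp]
    have h : (I * ↑β * τ).re = -(β * τ.im) := by
      simp [Complex.mul_re, Complex.mul_im]
    rw [h]
    have h2' : β * τ.im = Real.log ‖c‖ := by
      rw [hβdef, div_mul_cancel₀ _ hτ0]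
    rw [h2', Real.exp_neg, Real.exp_log (norm_pos_iff.2 hc)]
    exact inv_mul_cancel₀ (norm_ne_zero_iff.2 hc)
  have hstep1 : ∀ u, G (u + 1) = e1 * G u := by
    intro u
    simp only [hG, h1, he1, mul_add, mul_one, Complex.exp_add]
    ring
  have hstep2 : ∀ u, G (u + τ) = e2 * G u := by
    intro u
    simp only [hG, h2, he2, mul_add, Complex.exp_add]
    ring
  have hA : ∀ u, ‖G (u + 1)‖ = ‖G u‖ := by
    intro u; rw [hstep1, norm_mul, habs1, one_mul]
  have hA' : ∀ u, ‖G (u - 1)‖ = ‖G u‖ := by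
    intro u; rw [← hA (u - 1)]; ring_nf
  have hB : ∀ u, ‖G (u + τ)‖ = ‖G u‖ := by
    intro u; rw [hstep2, norm_mul, habs2, one_mul]
  have hB' : ∀ u, ‖G (u - τ)‖ = ‖G u‖ := by
    intro u; rw [← hB (u - τ)]; ring_nf
  have hint1 : ∀ (m : ℤ) (u : ℂ), ‖G (u + m)‖ = ‖G u‖ := by
    intro m
    induction m using Int.induction_on with
    | zero => simp
    | succ k ih =>
        intro u
        have harg : (u + ((k : ℤ) + 1 : ℤ) : ℂ) = (u + (k : ℤ)) + 1 := by push_cast; ring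
        rw [harg, hA, ih]
    | pred k ih =>
        intro u
        have harg : (u + (-(k : ℤ) - 1 : ℤ) : ℂ) = (u + -(k : ℤ)) - 1 := by push_cast; ring
        rw [harg, hA']
        have ih' := ih u; push_cast at ih' ⊢; exact ih'
  have hint2 : ∀ (m : ℤ) (u : ℂ), ‖G (u + m * τ)‖ = ‖G u‖ := by
    intro m
    induction m using Int.induction_on with
    | zero => simp
    | succ k ih =>
        intro u
        have harg : (u + ((k : ℤ) + 1 : ℤ) * τ : ℂ) = (u + (k : ℤ) * τ) + τ := by
          push_cast; ring
        rw [harg, hB, ih]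
    | pred k ih =>
        intro u
        have harg : (u + (-(k : ℤ) - 1 : ℤ) * τ : ℂ) = (u + -(k : ℤ) * τ) - τ := by
          push_cast; ring
        rw [harg, hB']
        have ih' := ih u; push_cast at ih' ⊢; exact ih'
  -- boundedness
  have hKc : IsCompact ((fun p : ℝ × ℝ => (p.1 : ℂ) + (p.2 : ℂ) * τ) ''
      (Set.Icc 0 1 ×ˢ Set.Icc 0 1)) := (isCompact_Icc.prod isCompact_Icc).image (by continuity)
  obtain ⟨C, hC⟩ := hKc.exists_bound_of_continuousOn hGd.continuous.continuousOn
  have hbd : ∀ u, ‖G u‖ ≤ C := by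
    intro u
    set y : ℝ := u.im / τ.im with hy
    set x : ℝ := u.re - y * τ.re with hx
    have hu : u = (x : ℂ) + (y : ℂ) * τ := by
      apply Complex.ext
      · simp [hx, Complex.mul_re]
      · simp [hy, Complex.mul_im]
        field_simp
    have hmem : ((Int.fract x : ℝ) : ℂ) + ((Int.fract y : ℝ) : ℂ) * τ ∈
        (fun p : ℝ × ℝ => (p.1 : ℂ) + (p.2 : ℂ) * τ) '' (Set.Icc 0 1 ×ˢ Set.Icc 0 1) :=
      ⟨(Int.fract x, Int.fract y),
        ⟨⟨Int.fract_nonneg x, le_of_lt (Int.fract_lt_one x)⟩,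
         ⟨Int.fract_nonneg y, le_of_lt (Int.fract_lt_one y)⟩⟩, rfl⟩
    have hdecomp : u = ((((Int.fract x : ℝ) : ℂ) + ((Int.fract y : ℝ) : ℂ) * τ)
        + (⌊y⌋ : ℤ) * τ) + (⌊x⌋ : ℤ) := by
      have hxf : ((Int.fract x : ℝ) : ℂ) = (x : ℂ) - ((⌊x⌋ : ℤ) : ℂ) := by
        rw [← Int.self_sub_floor]; push_cast; ring
      have hyf : ((Int.fract y : ℝ) : ℂ) = (y : ℂ) - ((⌊y⌋ : ℤ) : ℂ) := by
        rw [← Int.self_sub_floor]; push_cast; ring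
      rw [hxf, hyf, hu]; push_cast; ring
    calc ‖G u‖ = ‖G (((Int.fract x : ℝ) : ℂ) + ((Int.fract y : ℝ) : ℂ) * τ)‖ := by
          rw [hdecomp]
          show ‖_‖ = ‖_‖
          rw [hint1, hint2]
      _ ≤ C := hC _ hmem
  have hconst : ∀ u, G u = G 0 := by
    intro u
    exact hGd.apply_eq_apply_of_bounded
      (isBounded_iff_forall_norm_le.2 ⟨C, by rintro _ ⟨u, rfl⟩; exact hbd u⟩) u 0
  have hG0 : G 0 = 0 := by
    by_contra h0
    have h1' : G 1 = e1 * G 0 := by simpa using hstep1 0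
    rw [hconst 1] at h1'
    have he11 : e1 = 1 := by
      have : e1 * G 0 = 1 * G 0 := by rw [← h1', one_mul]
      exact mul_right_cancel₀ h0 this
    rw [he1, Complex.exp_eq_one_iff] at he11
    obtain ⟨k, hk⟩ := he11
    have hcast : (β : ℂ) = (k : ℂ) * (2 * Real.pi) := by
      have h' : I * (β : ℂ) = I * ((k : ℂ) * (2 * Real.pi)) := by rw [hk]; ring
      exact mul_left_cancel₀ I_ne_zero h'
    have hβr : β = (k : ℝ) * (2 * Real.pi) := by exact_mod_cast hcast
    apply hβ k
    rw [hβdef] at hβr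
    field_simp at hβr
    linarith [hβr]
  intro u
  have h := hconst u
  rw [hG0, hG] at h
  exact (mul_eq_zero.1 h).resolve_left (Complex.exp_ne_zero _)

/-- An entire function of three variables that is 1-periodic in each variable and has the
quasiperiodicity multipliers `e^{−2πin(v−u)}`, `e^{2πinη}`, `e^{−2πinη}` under the shift by
`τ` (with `Im τ > 0`) in the three variables, respectively, vanishes identically. -/
theorem quasiperiodic_entire_eq_zero (τ : ℂ) (hτ : 0 < τ.im) (n : ℕ) (hn : 0 < n)
    (ψ : ℂ → ℂ → ℂ → ℂ)
    (hol : Differentiable ℂ fun p : ℂ × ℂ × ℂ => ψ p.1 p.2.1 p.2.2)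
    (hper1 : ∀ η u v, ψ (η + 1) u v = ψ η u v)
    (hper2 : ∀ η u v, ψ η (u + 1) v = ψ η u v)
    (hper3 : ∀ η u v, ψ η u (v + 1) = ψ η u v)
    (hq1 : ∀ η u v, ψ (η + τ) u v =
      Complex.exp (-(2 * Real.pi * I) * (n : ℂ) * (v - u)) * ψ η u v)
    (hq2 : ∀ η u v, ψ η (u + τ) v =
      Complex.exp (2 * Real.pi * I * (n : ℂ) * η) * ψ η u v)
    (hq3 : ∀ η u v, ψ η u (v + τ) =
      Complex.exp (-(2 * Real.pi * I) * (n : ℂ) * η) * ψ η u v) :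
    ∀ η u v, ψ η u v = 0 := by
  have hτ0 : τ.im ≠ 0 := ne_of_gt hτ
  have hπ : (0:ℝ) < Real.pi := Real.pi_pos
  -- step 1 : for "good" η, the function u ↦ ψ η u v vanishes
  have good : ∀ η u v, (∀ k : ℤ, (n:ℝ) * η.im ≠ k * τ.im) → ψ η u v = 0 := by
    intro η u v hgood
    set c : ℂ := Complex.exp (2 * Real.pi * I * (n : ℂ) * η) with hcdef
    have hgd : Differentiable ℂ (fun w => ψ η w v) := by
      have : (fun w => ψ η w v) =
          (fun p : ℂ × ℂ × ℂ => ψ p.1 p.2.1 p.2.2) ∘ (fun w => (η, w, v)) := rfl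
      rw [this]
      exact hol.comp ((differentiable_const _).prodMk
        (differentiable_id.prodMk (differentiable_const _)))
    have hre : (2 * (Real.pi:ℂ) * I * (n : ℂ) * η).re = -(2 * Real.pi * n * η.im) := by
      simp [Complex.mul_re, Complex.mul_im]
      try ring
    have hlog : Real.log ‖c‖ = -(2 * Real.pi * n * η.im) := by
      rw [hcdef, Complex.norm_exp, Real.log_exp, hre]
    refine key τ hτ c (Complex.exp_ne_zero _) (fun w => ψ η w v) hgd
      (fun w => hper2 η w v) (fun w => hq2 η w v) ?_ u
    intro k heq
    rw [hlog] at heq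
    apply hgood (-k)
    have h2π : (2 * Real.pi) ≠ 0 := by positivity
    have hdiv : (2 * Real.pi) * (-((n:ℝ) * η.im)) = (2 * Real.pi) * ((k:ℝ) * τ.im) := by
      linear_combination heq
    have hdiv' := mul_left_cancel₀ h2π hdiv
    push_cast
    linarith [hdiv']
  -- step 2 : density argument
  intro η u v
  set r : ℝ := (n:ℝ) * η.im / τ.im with hr
  set a : ℝ := ((⌊r⌋ : ℝ) + 1 - r) * τ.im / n with ha
  set seq : ℕ → ℂ := fun j => η + ((a / (j + 2) : ℝ) : ℂ) * I with hseq
  have hnR : (0:ℝ) < n := by exact_mod_cast hn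
  have hgoodseq : ∀ j, ∀ k : ℤ, (n:ℝ) * (seq j).im ≠ k * τ.im := by
    intro j k heq
    have him : (seq j).im = η.im + a / (j + 2) := by
      simp only [hseq, Complex.add_im, Complex.mul_im, Complex.ofReal_re, Complex.ofReal_im,
        Complex.I_im, Complex.I_re]
      ring
    rw [him] at heq
    have hflt : r < (⌊r⌋ : ℝ) + 1 := Int.lt_floor_add_one r
    have hδpos : (0:ℝ) < ((⌊r⌋ : ℝ) + 1 - r) / (j + 2) :=
      div_pos (by linarith) (by positivity)
    have hδlt : ((⌊r⌋ : ℝ) + 1 - r) / (j + 2) < (⌊r⌋ : ℝ) + 1 - r := by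
      have h2 : (1:ℝ) < (j:ℝ) + 2 := by
        have := Nat.cast_nonneg (α := ℝ) j; linarith
      rw [div_lt_iff₀ (by positivity : (0:ℝ) < (j:ℝ) + 2)]
      exact (lt_mul_iff_one_lt_right (by linarith)).2 h2
    have hval : (n:ℝ) * (η.im + a / (j + 2)) =
        (r + ((⌊r⌋ : ℝ) + 1 - r) / (j + 2)) * τ.im := by
      have hnη : (n:ℝ) * η.im = r * τ.im := by
        rw [hr]; field_simp
      rw [ha, mul_add, add_mul, ← hnη]
      congr 1
      field_simp
    rw [hval] at heq
    have hkeq : r + ((⌊r⌋ : ℝ) + 1 - r) / (j + 2) = k :=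
      mul_right_cancel₀ hτ0 heq
    have hfl : (⌊r⌋ : ℝ) ≤ r := Int.floor_le r
    have h1 : (⌊r⌋ : ℝ) < (k:ℝ) := by linarith
    have h2 : (k:ℝ) < (⌊r⌋ : ℝ) + 1 := by linarith
    have h1' : ⌊r⌋ < k := by exact_mod_cast h1
    have h2' : k < ⌊r⌋ + 1 := by exact_mod_cast h2
    omega
  have hzero : ∀ j, ψ (seq j) u v = 0 := fun j => good (seq j) u v (hgoodseq j)
  have hlim : Tendsto seq atTop (𝓝 η) := by
    have h0 : Tendsto (fun j : ℕ => a / (j + 2)) atTop (𝓝 0) := by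
      have := tendsto_const_div_atTop_nhds_zero_nat a
      have hcomp := this.comp (tendsto_add_atTop_nat 2)
      exact hcomp.congr fun j => by simp [Function.comp]
    have h1 : Tendsto (fun j : ℕ => ((a / (j + 2) : ℝ) : ℂ) * I) atTop (𝓝 0) := by
      have := (Complex.continuous_ofReal.tendsto 0).comp h0
      simpa using this.mul_const I
    have h2 : Tendsto (fun j : ℕ => η + ((a / (j + 2) : ℝ) : ℂ) * I) atTop (𝓝 (η + 0)) :=
      (tendsto_const_nhds (x := η)).add h1
    rw [add_zero] at h2
    exact h2
  have hcont : Continuous (fun w => ψ w u v) := by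
    have : (fun w => ψ w u v) =
        (fun p : ℂ × ℂ × ℂ => ψ p.1 p.2.1 p.2.2) ∘ (fun w => (w, u, v)) := rfl
    rw [this]
    exact hol.continuous.comp (continuous_id.prodMk continuous_const)
  have hlim2 : Tendsto (fun j => ψ (seq j) u v) atTop (𝓝 (ψ η u v)) :=
    (hcont.tendsto η).comp hlim
  have hlim3 : Tendsto (fun j => ψ (seq j) u v) atTop (𝓝 0) := by
    simp only [hzero]; exact tendsto_const_nhds
  exact tendsto_nhds_unique hlim2 hlim3
end

section
/- The complex vector space Θ_{n,c}(Γ) of entire functions f with f(z+1)=f(z) and f(z+τ) = (−1)^n e^{−2πi(nz−c)} f(z) has dimension exactly n. -/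
open Complex

/-- The space `Θ_{n,c}(Γ)` of entire functions with `f(z+1) = f(z)` and
`f(z+τ) = (−1)^n e^{−2πi(nz−c)} f(z)`, as a subspace of `ℂ → ℂ`. -/
noncomputable def thetaSpace (τ : ℂ) (n : ℕ) (c : ℂ) : Submodule ℂ (ℂ → ℂ) where
  carrier := {f | Differentiable ℂ f ∧ (∀ z, f (z + 1) = f z) ∧
    ∀ z, f (z + τ) =
      (-1 : ℂ) ^ n * Complex.exp (-(2 * Real.pi * I) * ((n : ℂ) * z - c)) * f z}
  add_mem' := by
    rintro f g ⟨hf1, hf2, hf3⟩ ⟨hg1, hg2, hg3⟩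
    exact ⟨hf1.add hg1, fun z => by simp [hf2 z, hg2 z],
      fun z => by simp [hf3 z, hg3 z]; ring⟩
  zero_mem' := ⟨differentiable_const 0, fun z => rfl, fun z => by simp⟩
  smul_mem' := by
    rintro a f ⟨hf1, hf2, hf3⟩
    exact ⟨hf1.const_smul a, fun z => by simp [hf2 z],
      fun z => by simp [hf3 z]; ring⟩

/-! Expand `f ∈ Θ_{n,c}` in Fourier coefficients `a_m = ∫₀¹ e^{-2πimx} f(x) dx`. Moving the
segment `[0, 1]` to `[τ, τ + 1]` (Cauchy's theorem plus `1`-periodicity) turns the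
quasi-periodicity into `a_m = C_m a_{m+n}` with `C_m ≠ 0`, so `a_0, …, a_{n-1}` determine all
coefficients, hence `f` on `ℝ` (Fourier uniqueness) and on `ℂ` (identity theorem): `dim ≤ n`.
Conversely the functions `e^{2πikz} θ(nz + (k - n/2)τ + n/2 - c, nτ)`, `0 ≤ k < n`, lie in
`Θ_{n,c}` and are eigenvectors of translation by `1/n` with the distinct eigenvalues `e^{2πik/n}`;
they are nonzero because `θ(·, nτ)` has mean `1` over `[0, 1]`. Hence `dim ≥ n`. -/

open MeasureTheory Filter Function Topology

noncomputable def unitFourierCoeff (f : ℂ → ℂ) (m : ℤ) : ℂ :=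
  ∫ x in (0 : ℝ)..1, exp (-(2 * Real.pi * I * m * x)) * f x

theorem unitFourierCoeff_add {f g : ℂ → ℂ} (hf : Continuous f) (hg : Continuous g) (m : ℤ) :
    unitFourierCoeff (f + g) m = unitFourierCoeff f m + unitFourierCoeff g m := by
  simp only [unitFourierCoeff, Pi.add_apply, mul_add]
  exact intervalIntegral.integral_add ((by fun_prop : Continuous _).intervalIntegrable _ _)
    ((by fun_prop : Continuous _).intervalIntegrable _ _)

theorem unitFourierCoeff_smul (a : ℂ) (f : ℂ → ℂ) (m : ℤ) :
    unitFourierCoeff (a • f) m = a * unitFourierCoeff f m := by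
  simp only [unitFourierCoeff, Pi.smul_apply, smul_eq_mul, mul_left_comm _ a,
    intervalIntegral.integral_const_mul]

section PeriodicEntire

variable {f : ℂ → ℂ}

theorem integral_add_mul_I_eq_of_periodic (hf : Differentiable ℂ f) (hper : Periodic f 1)
    (y : ℝ) : ∫ x in (0 : ℝ)..1, f (x + y * I) = ∫ x in (0 : ℝ)..1, f x := by
  have hrect := integral_boundary_rect_eq_zero_of_differentiableOn f 0 (1 + y * I)
    hf.differentiableOn
  have hsides (t : ℝ) : f ((1 + y * I).re + t * I) = f ((0 : ℂ).re + t * I) := by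
    simpa [add_comm] using hper (t * I)
  simp only [hsides] at hrect
  simp only [zero_re, zero_im, add_re, add_im, one_re, one_im, mul_re, mul_im, ofReal_re,
    ofReal_im, I_re, I_im, ofReal_zero, zero_mul, mul_zero, mul_one, add_zero, zero_add, sub_self,
    smul_eq_mul, add_sub_cancel_right] at hrect
  linear_combination -hrect

theorem integral_comp_add_eq_of_periodic (hf : Differentiable ℂ f) (hper : Periodic f 1)
    (w : ℂ) : ∫ x in (0 : ℝ)..1, f (x + w) = ∫ x in (0 : ℝ)..1, f x := by
  set g : ℝ → ℂ := fun x ↦ f (x + w.im * I)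
  have hg : Periodic g 1 := fun x ↦ by
    simpa [g, add_right_comm] using hper (x + w.im * I)
  calc ∫ x in (0 : ℝ)..1, f (x + w) = ∫ x in (0 : ℝ)..1, g (x + w.re) := by
        congr! 2 with x
        simp only [g, ofReal_add, add_assoc, re_add_im]
    _ = ∫ x in w.re..w.re + 1, g x := by
        simp [intervalIntegral.integral_comp_add_right, add_comm]
    _ = ∫ x in (0 : ℝ)..1, g x := by simpa using hg.intervalIntegral_add_eq w.re 0
    _ = ∫ x in (0 : ℝ)..1, f x := integral_add_mul_I_eq_of_periodic hf hper w.im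

theorem eq_zero_of_forall_ofReal_eq_zero (hf : Differentiable ℂ f) (h : ∀ x : ℝ, f x = 0) :
    f = 0 := by
  have hfreq : ∃ᶠ z in 𝓝[≠] (0 : ℂ), f z = 0 :=
    (continuous_ofReal.continuousWithinAt.tendsto_nhdsWithin fun x hx ↦ by
      simpa using hx).frequently (Frequently.of_forall (f := 𝓝[≠] (0 : ℝ)) h)
  have hfa : AnalyticOnNhd ℂ f Set.univ := fun z _ ↦ hf.analyticAt z
  funext z
  exact hfa.eqOn_zero_of_preconnected_of_frequently_eq_zero isPreconnected_univ
    (Set.mem_univ 0) hfreq (Set.mem_univ z)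

theorem ofReal_eq_zero_of_unitFourierCoeff_eq_zero (hf : Continuous f)
    (hper : Periodic f 1) (h : ∀ m, unitFourierCoeff f m = 0) (x : ℝ) : f x = 0 := by
  have : Fact ((0 : ℝ) < 1) := ⟨one_pos⟩
  have hper' : Periodic (fun x : ℝ ↦ f x) 1 := fun x ↦ by simpa using hper x
  let G : C(AddCircle (1 : ℝ), ℂ) :=
    ⟨hper'.lift, continuous_coinduced_dom.mpr (hf.comp continuous_ofReal)⟩
  have hcoeff (m : ℤ) : fourierCoeff G m = 0 := by
    rw [fourierCoeff_eq_intervalIntegral _ m 0, ← h m, unitFourierCoeff]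
    simp only [G, ContinuousMap.coe_mk, Periodic.lift_coe, fourier_coe_apply]
    push_cast
    simp [neg_mul]
  have hG := hasSum_fourier_series_of_summable (summable_zero.congr fun m ↦ (hcoeff m).symm)
  have hterms (m : ℤ) : fourierCoeff G m • fourier m = (0 : C(AddCircle (1 : ℝ), ℂ)) := by
    rw [hcoeff, zero_smul]
  simp only [hterms] at hG
  have hG0 : G = 0 := (hasSum_zero.unique hG).symm
  simpa [G] using DFunLike.congr_fun hG0 (x : AddCircle (1 : ℝ))

end PeriodicEntire

section ThetaSpace

variable {τ c : ℂ} {n : ℕ} {f : ℂ → ℂ}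

theorem unitFourierCoeff_eq_mul_add (hf : f ∈ thetaSpace τ n c) (m : ℤ) :
    unitFourierCoeff f m = exp (-(2 * Real.pi * I * m * τ)) *
      ((-1) ^ n * exp (2 * Real.pi * I * c)) * unitFourierCoeff f (m + n) := by
  obtain ⟨hdiff, hper, hquasi⟩ := hf
  set g : ℂ → ℂ := fun z ↦ exp (-(2 * Real.pi * I * m * z)) * f z
  have hg : Periodic g 1 := fun z ↦ by
    have : exp (-(2 * Real.pi * I * m)) = 1 := by
      simpa [← neg_mul, mul_comm] using exp_int_mul_two_pi_mul_I (-m)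
    simp only [g, hper z, mul_add, neg_add, exp_add, mul_one, this]
  have hshift (x : ℝ) : g (x + τ) = exp (-(2 * Real.pi * I * m * τ)) *
      ((-1) ^ n * exp (2 * Real.pi * I * c)) *
        (exp (-(2 * Real.pi * I * (m + n : ℤ) * x)) * f x) := by
    have hexp : exp (-(2 * Real.pi * I * m * (x + τ))) *
        exp (-(2 * Real.pi * I) * (n * x - c)) =
        exp (-(2 * Real.pi * I * m * τ)) * exp (2 * Real.pi * I * c) *
          exp (-(2 * Real.pi * I * (m + n : ℤ) * x)) := by
      simp only [← exp_add]
      congr 1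
      push_cast
      ring
    simp only [g, hquasi]
    linear_combination ((-1) ^ n * f x) * hexp
  calc unitFourierCoeff f m = ∫ x in (0 : ℝ)..1, g (x + τ) :=
        (integral_comp_add_eq_of_periodic
          ((differentiable_id.const_mul _).neg.cexp.mul hdiff) hg τ).symm
    _ = _ := by simp only [hshift, intervalIntegral.integral_const_mul, unitFourierCoeff]

theorem unitFourierCoeff_eq_zero_of_mem_thetaSpace (hn : 0 < n) (hf : f ∈ thetaSpace τ n c)
    (h : ∀ k : Fin n, unitFourierCoeff f k = 0) (m : ℤ) : unitFourierCoeff f m = 0 := by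
  have hperiodic : Periodic (fun m : ℤ ↦ unitFourierCoeff f m = 0) n := fun m ↦ by
    simp [unitFourierCoeff_eq_mul_add hf m, exp_ne_zero]
  obtain ⟨k, ⟨hk₀, hkn⟩, hk⟩ := hperiodic.exists_mem_Ico₀ (by exact_mod_cast hn) m
  have hk' : ((⟨k.toNat, by omega⟩ : Fin n) : ℤ) = k := by simp [hk₀]
  exact hk ▸ hk' ▸ h _

theorem eq_zero_of_mem_thetaSpace (hn : 0 < n) (hf : f ∈ thetaSpace τ n c)
    (h : ∀ k : Fin n, unitFourierCoeff f k = 0) : f = 0 :=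
  eq_zero_of_forall_ofReal_eq_zero hf.1 <| ofReal_eq_zero_of_unitFourierCoeff_eq_zero
    hf.1.continuous hf.2.1 (unitFourierCoeff_eq_zero_of_mem_thetaSpace hn hf h)

end ThetaSpace

theorem integral_exp_two_pi_I_int_mul (j : ℤ) :
    ∫ x in (0 : ℝ)..1, exp (2 * Real.pi * I * j * x) = if j = 0 then 1 else 0 := by
  split_ifs with hj
  · simp [hj]
  · have hc : 2 * Real.pi * I * j ≠ 0 := by simp [Real.pi_ne_zero, I_ne_zero, hj]
    rw [integral_exp_mul_complex hc, ofReal_one, mul_one, ofReal_zero, mul_zero, exp_zero,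
      show 2 * Real.pi * I * j = j * (2 * Real.pi * I) by ring, exp_int_mul_two_pi_mul_I,
      sub_self, zero_div]

theorem integral_jacobiTheta₂ {τ : ℂ} (hτ : 0 < τ.im) :
    ∫ x in (0 : ℝ)..1, jacobiTheta₂ x τ = 1 := by
  have hsum : HasSum (fun j : ℤ ↦ ∫ x in (0 : ℝ)..1, jacobiTheta₂_term j x τ)
      (∫ x in (0 : ℝ)..1, jacobiTheta₂ x τ) := by
    refine intervalIntegral.hasSum_integral_of_dominated_convergence
      (fun j _ ↦ ‖jacobiTheta₂_term j 0 τ‖) (fun j ↦ ?_) (fun j ↦ ?_) ?_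
      intervalIntegrable_const ?_
    · exact (Continuous.aestronglyMeasurable (by unfold jacobiTheta₂_term; fun_prop))
    · exact ae_of_all _ fun x _ ↦ by simp [norm_jacobiTheta₂_term]
    · exact ae_of_all _ fun x _ ↦ ((summable_jacobiTheta₂_term_iff 0 τ).mpr hτ).norm
    · exact ae_of_all _ fun x _ ↦ hasSum_jacobiTheta₂_term x hτ
  have hterm (j : ℤ) : ∫ x in (0 : ℝ)..1, jacobiTheta₂_term j x τ =
      if j = 0 then 1 else 0 := by
    simp only [jacobiTheta₂_term, exp_add, intervalIntegral.integral_mul_const,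
      integral_exp_two_pi_I_int_mul]
    split_ifs with hj <;> simp [hj]
  simp only [hterm] at hsum
  exact hsum.unique (hasSum_ite_eq 0 1)

section ThetaBasis

variable (τ : ℂ) (n : ℕ) (c : ℂ)

/-- The shift `(k - n/2) τ + n/2 - c` makes `jacobiTheta₂_add_left'` produce exactly the factor
`(-1)^n e^{-2πi(nz - c)}` of `thetaSpace τ n c`. -/
noncomputable def thetaBasis (k : ℕ) (z : ℂ) : ℂ :=
  exp (2 * Real.pi * I * k * z) * jacobiTheta₂ (n * z + (k - n / 2) * τ + (n / 2 - c)) (n * τ)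

variable {τ n}

theorem thetaBasis_mem (hτ : 0 < τ.im) (hn : 0 < n) (k : ℕ) :
    thetaBasis τ n c k ∈ thetaSpace τ n c := by
  have hnτ : 0 < (n * τ).im := by simpa using mul_pos (Nat.cast_pos.mpr hn) hτ
  have hθ : Periodic (jacobiTheta₂ · (n * τ)) 1 := (jacobiTheta₂_add_left · _)
  refine ⟨fun z ↦ ?_, fun z ↦ ?_, fun z ↦ ?_⟩
  · exact (differentiableAt_id.const_mul _).cexp.mul
      ((differentiableAt_jacobiTheta₂_fst _ hnτ).comp z (by fun_prop))
  · have hexp : exp (2 * Real.pi * I * k * (z + 1)) = exp (2 * Real.pi * I * k * z) := by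
      rw [mul_add, mul_one, exp_add, show 2 * Real.pi * I * k = (k : ℤ) * (2 * Real.pi * I) by
        push_cast; ring, exp_int_mul_two_pi_mul_I, mul_one]
    have harg : n * (z + 1) + (k - n / 2) * τ + (n / 2 - c) =
        n * z + (k - n / 2) * τ + (n / 2 - c) + n := by ring
    rw [thetaBasis, thetaBasis, hexp, harg]
    simpa using hθ.nat_mul n _
  · set w := n * z + (k - n / 2) * τ + (n / 2 - c)
    have harg : n * (z + τ) + (k - n / 2) * τ + (n / 2 - c) = w + n * τ := by ring
    have hsign : (-1 : ℂ) ^ n = exp (n * (Real.pi * I)) := by rw [exp_nat_mul, exp_pi_mul_I]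
    have hexp : exp (2 * Real.pi * I * k * (z + τ)) * exp (-Real.pi * I * (n * τ + 2 * w)) =
        exp ((-n : ℤ) * (2 * Real.pi * I)) * (exp (n * (Real.pi * I)) *
          exp (-(2 * Real.pi * I) * (n * z - c)) * exp (2 * Real.pi * I * k * z)) := by
      simp only [w, ← exp_add]
      congr 1
      push_cast
      ring
    rw [exp_int_mul_two_pi_mul_I, one_mul] at hexp
    rw [thetaBasis, thetaBasis, harg, jacobiTheta₂_add_left', hsign]
    linear_combination jacobiTheta₂ w (n * τ) * hexp

theorem thetaBasis_add_inv_natCast (hn : n ≠ 0) (k : ℕ) (z : ℂ) :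
    thetaBasis τ n c k (z + 1 / n) = exp (2 * Real.pi * I / n) ^ k * thetaBasis τ n c k z := by
  have harg : n * (z + 1 / n) + (k - n / 2) * τ + (n / 2 - c) =
      n * z + (k - n / 2) * τ + (n / 2 - c) + 1 := by
    field_simp
    ring
  rw [thetaBasis, thetaBasis, harg, jacobiTheta₂_add_left, ← exp_nat_mul, ← mul_assoc, ← exp_add]
  congr 2
  field_simp
  ring

theorem thetaBasis_ne_zero (hτ : 0 < τ.im) (hn : 0 < n) (k : ℕ) : thetaBasis τ n c k ≠ 0 := by
  intro h
  have hθ (w : ℂ) : jacobiTheta₂ w (n * τ) = 0 := by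
    set z := (w - (k - n / 2) * τ - (n / 2 - c)) / n
    have harg : n * z + (k - n / 2) * τ + (n / 2 - c) = w := by
      rw [mul_div_cancel₀ _ (by exact_mod_cast hn.ne')]
      ring
    simpa [thetaBasis, harg, exp_ne_zero] using congr_fun h z
  have hnτ : 0 < (n * τ).im := by simpa using mul_pos (Nat.cast_pos.mpr hn) hτ
  simpa [hθ] using integral_jacobiTheta₂ hnτ

end ThetaBasis

theorem linearIndependent_thetaBasis {τ : ℂ} {n : ℕ} (c : ℂ) (hτ : 0 < τ.im) (hn : 0 < n) :
    LinearIndependent ℂ (fun k : Fin n ↦ thetaBasis τ n c k) := by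
  have hζ := isPrimitiveRoot_exp n hn.ne'
  refine Module.End.eigenvectors_linearIndependent' (LinearMap.funLeft ℂ ℂ (· + 1 / (n : ℂ)))
    (fun k : Fin n ↦ exp (2 * Real.pi * I / n) ^ (k : ℕ))
    (fun i j hij ↦ Fin.ext (hζ.pow_inj i.2 j.2 hij)) _ fun k ↦ ?_
  rw [Module.End.hasEigenvector_iff, Module.End.mem_eigenspace_iff]
  exact ⟨funext (thetaBasis_add_inv_natCast c hn.ne' k), thetaBasis_ne_zero c hτ hn k⟩

noncomputable def thetaCoeffs (τ : ℂ) (n : ℕ) (c : ℂ) : thetaSpace τ n c →ₗ[ℂ] Fin n → ℂ where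
  toFun f k := unitFourierCoeff f k
  map_add' f g := funext (unitFourierCoeff_add f.2.1.continuous g.2.1.continuous ·)
  map_smul' a f := funext (unitFourierCoeff_smul a f ·)

theorem thetaCoeffs_injective {τ : ℂ} {n : ℕ} (c : ℂ) (hn : 0 < n) :
    Function.Injective (thetaCoeffs τ n c) := by
  rw [← LinearMap.ker_eq_bot, LinearMap.ker_eq_bot']
  exact fun f hf ↦ Subtype.ext (eq_zero_of_mem_thetaSpace hn f.2 (congr_fun hf))

/-- `dim Θ_{n,c}(Γ) = n`. -/
theorem thetaSpace_finrank (τ : ℂ) (hτ : 0 < τ.im) (n : ℕ) (hn : 0 < n) (c : ℂ) :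
    Module.finrank ℂ (thetaSpace τ n c) = n := by
  have hinj := thetaCoeffs_injective c hn (τ := τ)
  have : Module.Finite ℂ (thetaSpace τ n c) := .of_injective _ hinj
  have hindep : LinearIndependent ℂ
      (fun k : Fin n ↦ (⟨thetaBasis τ n c k, thetaBasis_mem c hτ hn k⟩ : thetaSpace τ n c)) :=
    .of_comp (thetaSpace τ n c).subtype (linearIndependent_thetaBasis c hτ hn)
  refine le_antisymm ?_ ?_
  · simpa using LinearMap.finrank_le_finrank_of_injective hinj
  · simpa using hindep.fintype_card_le_finrank
end
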